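/- Let k be a perfect field of characteristic p, 𝔖₁ = k[[u]] with Frobenius φ(Σ a_n u^n) = Σ a_n^p u^{pn}, and let (n_i)_{i ∈ ℤ/dℤ} be non-negative integers such that the classes s_i = Σ_{j=0}^{d-1} n_{i+j} p^{d-1-j}, taken modulo p^d - 1, are pairwise distinct. Let 𝔐 = ⊕_{i ∈ ℤ/dℤ} e_i 𝔖₁ with φ(e_i) = u^{n_i} e_{i+1}. For a non-negative integer s, the equation φ^d(x) = u^s x has a nonzero solution x ∈ 𝔐 if and only if there exists i ∈ ℤ/dℤ and a non-negative integer v with s - s_i = v(p^d - 1); in that case the set of nonzero solutions is { α u^v e_i : α ∈ k, α^{p^d} = α, α ≠ 0 }. -/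

import Mathlib

/-! Iterating `φ` `d` times decouples the coordinates: `(φ^d x)_j = u^{s_j} x_j^{p^d}`.
If a nonzero `f` satisfies `u^a f^q = u^b f` with `q = p^d`, comparing orders gives
`a + q w = b + w` for `w = ord f`, and the unit part `g` of `f` satisfies `g^q = g`. By additivity
of Frobenius `g - g(0)` satisfies the same equation, which a nonzero series of positive order
cannot, so `f = α u^w`. Distinctness of the `s_j` modulo `q - 1` then leaves a single coordinate. -/

open Finset

section TwistedFrobenius

variable {M : Type*} [CommMonoid M] {d : ℕ} {u : M} {p : ℕ} {n : ZMod d → ℕ}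
  {Φ : (ZMod d → M) → ZMod d → M}

theorem iterate_twistedFrobenius_apply (hΦ : ∀ x j, Φ x j = u ^ n (j - 1) * x (j - 1) ^ p)
    (m : ℕ) (x : ZMod d → M) (j : ZMod d) :
    Φ^[m] x j = u ^ (∑ t ∈ range m, n (j - 1 - t) * p ^ t) * x (j - m) ^ p ^ m := by
  induction m generalizing x with
  | zero => simp
  | succ m ih =>
    rw [Function.iterate_succ_apply, ih, hΦ, sum_range_succ, mul_pow, ← pow_mul, ← pow_mul,
      ← mul_assoc, ← pow_add, ← pow_succ', sub_right_comm, Nat.cast_succ, sub_sub,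
      add_comm (1 : ZMod d)]

theorem iterate_card_twistedFrobenius_apply
    (hΦ : ∀ x j, Φ x j = u ^ n (j - 1) * x (j - 1) ^ p) (x : ZMod d → M) (j : ZMod d) :
    Φ^[d] x j = u ^ (∑ t ∈ range d, n (j + t) * p ^ (d - 1 - t)) * x j ^ p ^ d := by
  rw [iterate_twistedFrobenius_apply hΦ, ZMod.natCast_self, sub_zero, ← sum_range_reflect]
  congr 2
  refine sum_congr rfl fun t ht => ?_
  have htd : 1 + t ≤ d := by rw [add_comm]; exact mem_range.mp ht
  rw [Nat.sub_sub, Nat.cast_sub htd, ZMod.natCast_self]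
  congr 2
  push_cast
  ring

end TwistedFrobenius

namespace PowerSeries

instance {R : Type*} [Semiring R] (p : ℕ) [CharP R p] : CharP R⟦X⟧ p :=
  charP_of_injective_ringHom C_injective p

variable {R : Type*} [CommRing R] [IsDomain R] (p : ℕ) [Fact p.Prime] [CharP R p]

theorem eq_C_constantCoeff_of_pow_char_pow_eq_self {e : ℕ} (he : e ≠ 0) {g : R⟦X⟧}
    (hg : g ^ p ^ e = g) : g = C (constantCoeff g) := by
  have hc : constantCoeff g ^ p ^ e = constantCoeff g := by rw [← map_pow, hg]
  set h := g - C (constantCoeff g) with h_def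
  have hh : h ^ p ^ e = h := by rw [sub_pow_char_pow, hg, ← map_pow, hc]
  suffices h = 0 from sub_eq_zero.mp this
  by_contra hne
  obtain ⟨m, hm⟩ := ENat.ne_top_iff_exists.mp (order_finite_iff_ne_zero.mpr hne).ne
  have hm0 : m ≠ 0 := by
    rintro rfl
    exact (order_ne_zero_iff_constCoeff_eq_zero (φ := h)).mpr (by simp [h_def]) hm.symm
  have hq : 1 < p ^ e := Nat.one_lt_pow he (Fact.out : p.Prime).one_lt
  have := congrArg order hh
  rw [order_pow, ← hm, nsmul_eq_mul] at this
  norm_cast at this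
  nlinarith [Nat.pos_of_ne_zero hm0]

theorem X_pow_mul_pow_char_pow_eq_X_pow_mul_iff {e : ℕ} (he : e ≠ 0) {a b : ℕ} {f : R⟦X⟧} :
    f ≠ 0 ∧ X ^ a * f ^ p ^ e = X ^ b * f ↔
      ∃ (w : ℕ) (α : R), α ^ p ^ e = α ∧ α ≠ 0 ∧ (b : ℤ) - a = w * ((p : ℤ) ^ e - 1) ∧
        f = C α * X ^ w := by
  constructor
  · rintro ⟨hf, heq⟩
    set g := divXPowOrder f
    have hg : g ^ p ^ e = g := by
      simpa [divXPowOrder_mul, divXPowOrder_pow] using congrArg divXPowOrder heq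
    have hw : (a : ℤ) + p ^ e * f.order.toNat = b + f.order.toNat := by
      have := congrArg order heq
      simp only [order_mul, order_pow, order_X, nsmul_eq_mul, mul_one] at this
      rw [← coe_toNat_order hf] at this
      exact_mod_cast this
    refine ⟨f.order.toNat, constantCoeff g, by rw [← map_pow, hg],
      constantCoeff_divXPowOrder_eq_zero_iff.not.mpr hf, by linear_combination -hw, ?_⟩
    rw [mul_comm, ← eq_C_constantCoeff_of_pow_char_pow_eq_self p he hg]
    exact X_pow_order_mul_divXPowOrder.symm
  · rintro ⟨w, α, hα, hα0, hw, rfl⟩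
    have hw' : a + p ^ e * w = b + w := by
      zify; linear_combination -hw
    refine ⟨mul_ne_zero ((map_ne_zero_iff _ C_injective).mpr hα0) (pow_ne_zero _ X_ne_zero), ?_⟩
    calc X ^ a * (C α * X ^ w) ^ p ^ e = C (α ^ p ^ e) * X ^ (a + p ^ e * w) := by
          rw [mul_pow, map_pow, pow_add, ← pow_mul, mul_comm w]; ring
      _ = X ^ b * (C α * X ^ w) := by rw [hα, hw', pow_add]; ring

theorem forall_X_pow_mul_pow_char_pow_eq_iff_eq_single {ι : Type*} [DecidableEq ι] {e : ℕ}
    (he : e ≠ 0) {a : ι → ℕ} (ha : ∀ i j, (a i : ℤ) ≡ a j [ZMOD (p : ℤ) ^ e - 1] → i = j)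
    {s v : ℕ} {i : ι} (hv : (s : ℤ) - a i = v * ((p : ℤ) ^ e - 1)) (x : ι → R⟦X⟧) :
    (x ≠ 0 ∧ ∀ j, X ^ a j * x j ^ p ^ e = X ^ s * x j) ↔
      ∃ α : R, α ^ p ^ e = α ∧ α ≠ 0 ∧ x = Pi.single i (C α * X ^ v) := by
  have hq : (p : ℤ) ^ e - 1 ≠ 0 := by
    have : (1 : ℤ) < p ^ e := by exact_mod_cast Nat.one_lt_pow he (Fact.out : p.Prime).one_lt
    linarith
  constructor
  · rintro ⟨hx, hsol⟩
    -- distinctness of the `a j` mod `p ^ e - 1` pins down the index of a nonzero component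
    have hsupp : ∀ j, x j ≠ 0 → j = i ∧ ∃ α : R, α ^ p ^ e = α ∧ α ≠ 0 ∧ x j = C α * X ^ v := by
      intro j hj
      obtain ⟨w, α, hα, hα0, hw, hxj⟩ :=
        (X_pow_mul_pow_char_pow_eq_X_pow_mul_iff p he).mp ⟨hj, hsol j⟩
      obtain rfl : j = i :=
        ha _ _ (Int.modEq_iff_dvd.mpr ⟨w - v, by linear_combination hw - hv⟩)
      obtain rfl : w = v := by exact_mod_cast mul_right_cancel₀ hq (hw.symm.trans hv)
      exact ⟨rfl, α, hα, hα0, hxj⟩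
    obtain ⟨j, hj⟩ := Function.ne_iff.mp hx
    obtain ⟨rfl, α, hα, hα0, hxj⟩ := hsupp j hj
    refine ⟨α, hα, hα0, funext fun k => ?_⟩
    rcases eq_or_ne k j with rfl | hk
    · rw [Pi.single_eq_same, hxj]
    · rw [Pi.single_eq_of_ne hk]
      by_contra hxk
      exact hk (hsupp k hxk).1
  · rintro ⟨α, hα, hα0, rfl⟩
    have hsol := (X_pow_mul_pow_char_pow_eq_X_pow_mul_iff p he).mpr ⟨v, α, hα, hα0, hv, rfl⟩
    refine ⟨by simpa [Pi.single_eq_zero_iff] using hsol.1, fun j => ?_⟩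
    rcases eq_or_ne j i with rfl | hj
    · rw [Pi.single_eq_same]
      exact hsol.2
    · rw [Pi.single_eq_of_ne hj, zero_pow (pow_ne_zero _ (Fact.out : p.Prime).ne_zero), mul_zero,
        mul_zero]

end PowerSeries

open PowerSeries

theorem stmt_10_general (p : ℕ) (hp : p.Prime) (k : Type) [Field k] [CharP k p]
    (d : ℕ) (hd : 1 ≤ d) (n : ZMod d → ℕ)
    (Φ : (ZMod d → PowerSeries k) → (ZMod d → PowerSeries k))
    (hΦ : ∀ (x : ZMod d → PowerSeries k) (j : ZMod d),
      Φ x j = (X : PowerSeries k) ^ (n (j - 1)) * (x (j - 1)) ^ p)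
    (s' : ZMod d → ℕ)
    (hs' : ∀ i : ZMod d, s' i = ∑ j ∈ Finset.range d, n (i + (j : ZMod d)) * p ^ (d - 1 - j))
    (hdist : ∀ i j : ZMod d, (s' i : ℤ) ≡ s' j [ZMOD ((p : ℤ) ^ d - 1)] → i = j)
    (s : ℕ) :
    ((∃ x : ZMod d → PowerSeries k, x ≠ 0 ∧
        Φ^[d] x = ((X : PowerSeries k) ^ s) • x) ↔
      (∃ (i : ZMod d) (v : ℕ), (s : ℤ) - s' i = (v : ℤ) * ((p : ℤ) ^ d - 1))) ∧
    (∀ (i : ZMod d) (v : ℕ), (s : ℤ) - s' i = (v : ℤ) * ((p : ℤ) ^ d - 1) →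
      ∀ x : ZMod d → PowerSeries k,
        (x ≠ 0 ∧ Φ^[d] x = ((X : PowerSeries k) ^ s) • x) ↔
          ∃ α : k, α ^ (p ^ d) = α ∧ α ≠ 0 ∧
            x = Pi.single i ((C (R := k) α) * (X : PowerSeries k) ^ v)) := by
  have : Fact p.Prime := ⟨hp⟩
  have hd0 : d ≠ 0 := Nat.one_le_iff_ne_zero.mp hd
  have hcomp : ∀ x, Φ^[d] x = (X : PowerSeries k) ^ s • x ↔
      ∀ j, X ^ s' j * x j ^ p ^ d = X ^ s * x j := by
    intro x
    simp only [funext_iff, iterate_card_twistedFrobenius_apply hΦ, ← hs', Pi.smul_apply,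
      smul_eq_mul]
  have hsol : ∀ (i : ZMod d) (v : ℕ), (s : ℤ) - s' i = v * ((p : ℤ) ^ d - 1) →
      ∀ x : ZMod d → PowerSeries k, (x ≠ 0 ∧ Φ^[d] x = (X : PowerSeries k) ^ s • x) ↔
        ∃ α : k, α ^ p ^ d = α ∧ α ≠ 0 ∧ x = Pi.single i (C α * X ^ v) := by
    intro i v hv x
    rw [hcomp]
    exact forall_X_pow_mul_pow_char_pow_eq_iff_eq_single p hd0 hdist hv x
  refine ⟨⟨?_, fun ⟨i, v, hv⟩ => ⟨_, (hsol i v hv _).mpr ⟨1, one_pow _, one_ne_zero, rfl⟩⟩⟩, hsol⟩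
  rintro ⟨x, hx, hxΦ⟩
  obtain ⟨j, hj⟩ := Function.ne_iff.mp hx
  obtain ⟨w, -, -, -, hw, -⟩ :=
    (X_pow_mul_pow_char_pow_eq_X_pow_mul_iff p hd0).mp ⟨hj, (hcomp x).mp hxΦ j⟩
  exact ⟨j, w, hw⟩

/-- Let `k` be a perfect field of characteristic `p`, `𝔖₁ = k[[u]]` with Frobenius
`f ↦ f^p`, and `(n_i)_{i ∈ ℤ/dℤ}` non-negative integers such that the classes of
`s_i = Σ_{j<d} n_{i+j} p^{d-1-j}` modulo `p^d - 1` are pairwise distinct. Let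
`𝔐 = ⊕ e_i 𝔖₁` with `φ(e_i) = u^{n_i} e_{i+1}`, realized as
`Φ x j = u^{n_{j-1}} (x_{j-1})^p` on `ZMod d → k[[u]]`. For `s ≥ 0`, the equation
`φ^d(x) = u^s x` has a nonzero solution iff there are `i` and `v ≥ 0` with
`s - s_i = v (p^d - 1)`; in that case the nonzero solutions are exactly the
`α u^v e_i` with `α ∈ k`, `α^{p^d} = α`, `α ≠ 0`. -/
theorem stmt_10 (p : ℕ) (hp : p.Prime) (k : Type) [Field k] [CharP k p]
    (hperf : Function.Bijective fun a : k => a ^ p)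
    (d : ℕ) (hd : 1 ≤ d) (n : ZMod d → ℕ)
    (Φ : (ZMod d → PowerSeries k) → (ZMod d → PowerSeries k))
    (hΦ : ∀ (x : ZMod d → PowerSeries k) (j : ZMod d),
      Φ x j = (X : PowerSeries k) ^ (n (j - 1)) * (x (j - 1)) ^ p)
    (s' : ZMod d → ℕ)
    (hs' : ∀ i : ZMod d, s' i = ∑ j ∈ Finset.range d, n (i + (j : ZMod d)) * p ^ (d - 1 - j))
    (hdist : ∀ i j : ZMod d, (s' i : ℤ) ≡ s' j [ZMOD ((p : ℤ) ^ d - 1)] → i = j)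
    (s : ℕ) :
    ((∃ x : ZMod d → PowerSeries k, x ≠ 0 ∧
        Φ^[d] x = ((X : PowerSeries k) ^ s) • x) ↔
      (∃ (i : ZMod d) (v : ℕ), (s : ℤ) - s' i = (v : ℤ) * ((p : ℤ) ^ d - 1))) ∧
    (∀ (i : ZMod d) (v : ℕ), (s : ℤ) - s' i = (v : ℤ) * ((p : ℤ) ^ d - 1) →
      ∀ x : ZMod d → PowerSeries k,
        (x ≠ 0 ∧ Φ^[d] x = ((X : PowerSeries k) ^ s) • x) ↔
          ∃ α : k, α ^ (p ^ d) = α ∧ α ≠ 0 ∧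
            x = Pi.single i ((C (R := k) α) * (X : PowerSeries k) ^ v)) :=
  stmt_10_general p hp k d hd n Φ hΦ s' hs' hdist s
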